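/- For r ≥ 1, define the r-th order transport operator by T̄_{h,(r)} φ⁰_{h,k}(x) := χ_{Σ̃_{h,k}}(x) · φ⁰_{h,k}(B̄_{(r),k}(x)), extended to f⁰_h by linearity. Then there exists a constant C depending only on c_w, L_φ, ρ⁰, d and r (independent of h, f⁰ and the flow) such that ‖(T̄_{h,(r)} − T̄_ex) f⁰_h‖_{L^∞(ℝ^d)} ≤ C · h^r · c̃_{F,(r)} · (1 + h c̃_{F,(1)})^d · ‖f⁰‖_{L^∞}, where c̃_{F,(m)} := (ρ̃ |F̄|₁)^{m+1} |B̄|_{m+1} for m ≥ 1 and ρ̃ := ρ⁰ (1 + (hρ⁰/2) |F̄|₁² |B̄|₂). -/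

import Mathlib

open scoped NNReal
open Set

/-- Grid node `x⁰_k := h k`. -/
noncomputable def node (d : ℕ) (h : ℝ) (k : Fin d → ℤ) : Fin d → ℝ :=
  fun i => h * (k i : ℝ)

/-- Particle shape function `φ⁰_{h,k}(x) := h^{-d} φ(h⁻¹ x - k)`. -/
noncomputable def part (d : ℕ) (h : ℝ) (φ : (Fin d → ℝ) → ℝ)
    (k : Fin d → ℤ) (x : Fin d → ℝ) : ℝ :=
  (h ^ d)⁻¹ * φ (fun i => x i / h - (k i : ℝ))

/-- Partial derivative `∂_l g`. -/
noncomputable def pd (d : ℕ) (l : Fin d) (g : (Fin d → ℝ) → ℝ) : (Fin d → ℝ) → ℝ :=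
  fun x => fderiv ℝ g x (Pi.single l 1)

/-- Iterated partial derivative `∂_{l₁} ⋯ ∂_{l_m} g`. -/
noncomputable def iterPD (d : ℕ) : List (Fin d) → ((Fin d → ℝ) → ℝ) → ((Fin d → ℝ) → ℝ)
  | [], g => g
  | l :: ls, g => pd d l (iterPD d ls g)

/-- Linearized backward flow `B̄_{(1),k}(x) := x⁰_k + J_k⁻¹ (x − F̄(x⁰_k))`. -/
noncomputable def B1 (d : ℕ) (h : ℝ) (F : (Fin d → ℝ) ≃ (Fin d → ℝ))
    (k : Fin d → ℤ) (x : Fin d → ℝ) : Fin d → ℝ :=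
  node d h k +
    fderiv ℝ (F.symm : (Fin d → ℝ) → (Fin d → ℝ)) (F (node d h k)) (x - F (node d h k))

/-- Linearized forward flow `F̄_{(1),k}(x̂) := F̄(x⁰_k) + J_k (x̂ − x⁰_k)`. -/
noncomputable def F1 (d : ℕ) (h : ℝ) (F : (Fin d → ℝ) ≃ (Fin d → ℝ))
    (k : Fin d → ℤ) (y : Fin d → ℝ) : Fin d → ℝ :=
  F (node d h k) +
    fderiv ℝ (F : (Fin d → ℝ) → (Fin d → ℝ)) (node d h k) (y - node d h k)

/-- Enlarged radius `ρ̃_{h,k} := ρ⁰ + h⁻¹ sup_{x ∈ F̄(Σ⁰_{h,k})} ‖B̄_{(1),k}(x) − B̄(x)‖_∞`. -/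
noncomputable def ρt (d : ℕ) (h ρ0 : ℝ) (φ : (Fin d → ℝ) → ℝ)
    (F : (Fin d → ℝ) ≃ (Fin d → ℝ)) (k : Fin d → ℤ) : ℝ :=
  ρ0 + h⁻¹ * ⨆ x : (F '' Function.support (part d h φ k)),
      ‖B1 d h F k x.1 - F.symm x.1‖

/-- Enlarged a priori support `Σ̃_{h,k} := F̄_{(1),k}(B_∞(x⁰_k, h ρ̃_{h,k}))`. -/
noncomputable def St (d : ℕ) (h ρ0 : ℝ) (φ : (Fin d → ℝ) → ℝ)
    (F : (Fin d → ℝ) ≃ (Fin d → ℝ)) (k : Fin d → ℤ) : Set (Fin d → ℝ) :=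
  F1 d h F k '' Metric.closedBall (node d h k) (h * ρt d h ρ0 φ F k)

/-- Degree-`r` Taylor polynomial of `B` at `a`. -/
noncomputable def taylorP (d r : ℕ) (B : (Fin d → ℝ) → (Fin d → ℝ))
    (a x : Fin d → ℝ) : Fin d → ℝ :=
  ∑ j ∈ Finset.range (r + 1),
    (j.factorial : ℝ)⁻¹ • iteratedFDeriv ℝ j B a (fun _ => x - a)

/-! On `Σ̃_{h,k}` the point `x` is within `|F̄|₁ h ρ̃_{h,k}` of `F̄(x⁰_k)`, and `ρ̃_{h,k} ≤ 2ρ̃`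
because the linearization error `B̄_{(1),k} − B̄` on `F̄(Σ⁰_{h,k})` is at most
`|B̄|₂ (h ρ⁰ |F̄|₁)²`. Hence Taylor's theorem with integral remainder bounds
`B̄_{(r),k}(x) − B̄(x)` by `|B̄|_{r+1} (2 h ρ̃ |F̄|₁)^{r+1}`, and the `L_φ h^{-d-1}`-Lipschitz
particle turns this into the error of one term. Off `Σ̃_{h,k}` both the exact and the transported
particle vanish at `x`, since `B̄_{(1),k}` maps `x` into the ball of radius `h ρ̃_{h,k}` whenever
`B̄(x) ∈ Σ⁰_{h,k}`. A contributing `k` therefore has `x⁰_k` within `h (2ρ̃ + 4h c̃_{F,(1)})` of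
`B̄(x)`, and there are at most `(4ρ⁰ + 10)^d (1 + h c̃_{F,(1)})^d` such lattice points. -/

theorem iterPD_ofFn_eq_iteratedFDeriv {d m : ℕ} {f : (Fin d → ℝ) → ℝ} (hf : ContDiff ℝ m f)
    (ls : Fin m → Fin d) (x : Fin d → ℝ) :
    iterPD d (List.ofFn ls) f x = iteratedFDeriv ℝ m f x (fun j => Pi.single (ls j) 1) := by
  induction m generalizing x with
  | zero => rfl
  | succ m ih =>
    have hdiff : Differentiable ℝ (iteratedFDeriv ℝ m f) :=
      hf.differentiable_iteratedFDeriv (mod_cast Nat.lt_succ_self m)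
    have htail : iterPD d (List.ofFn (Fin.tail ls)) f =
        fun y => iteratedFDeriv ℝ m f y (fun j => Pi.single (Fin.tail ls j) 1) :=
      funext (ih (hf.of_succ) (Fin.tail ls))
    rw [(hdiff x).iteratedFDeriv_succ_apply_left', List.ofFn_succ]
    exact congrArg (fun g => fderiv ℝ g x (Pi.single (ls 0) 1)) htail

theorem sum_abs_iterPD_fin_one {d : ℕ} (g : (Fin d → ℝ) → ℝ) (x : Fin d → ℝ) :
    ∑ ls : Fin 1 → Fin d, |iterPD d (List.ofFn ls) g x| = ∑ l, |pd d l g x| :=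
  Fintype.sum_equiv (Equiv.funUnique (Fin 1) (Fin d)) _ _ fun _ => rfl

theorem sum_abs_iterPD_fin_two {d : ℕ} (g : (Fin d → ℝ) → ℝ) (x : Fin d → ℝ) :
    ∑ ls : Fin 2 → Fin d, |iterPD d (List.ofFn ls) g x| =
      ∑ l₁, ∑ l₂, |pd d l₁ (pd d l₂ g) x| := by
  rw [← Fintype.sum_prod_type']
  exact Fintype.sum_equiv (finTwoArrowEquiv (Fin d)) _ _ fun _ => rfl

theorem ContinuousMultilinearMap.norm_le_sum_abs_apply_single {d m : ℕ}
    (T : ContinuousMultilinearMap ℝ (fun _ : Fin m => Fin d → ℝ) ℝ) :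
    ‖T‖ ≤ ∑ ls : Fin m → Fin d, |T (fun j => Pi.single (ls j) 1)| := by
  refine T.opNorm_le_bound (Finset.sum_nonneg fun _ _ => abs_nonneg _) fun v => ?_
  have hexpand :
      T v = ∑ ls : Fin m → Fin d, (∏ j, v j (ls j)) * T (fun j => Pi.single (ls j) 1) := by
    conv_lhs => rw [funext fun j => pi_eq_sum_univ' (v j)]
    simp_rw [T.map_sum, T.map_smul_univ, smul_eq_mul]
  calc ‖T v‖ ≤ ∑ ls : Fin m → Fin d, (∏ j, ‖v j‖) * |T (fun j => Pi.single (ls j) 1)| := by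
        rw [Real.norm_eq_abs, hexpand]
        refine (Finset.abs_sum_le_sum_abs _ _).trans (Finset.sum_le_sum fun ls _ => ?_)
        rw [abs_mul, Finset.abs_prod]
        gcongr with j
        exact norm_le_pi_norm (v j) (ls j)
    _ = _ := by rw [← Finset.mul_sum, mul_comm]

theorem norm_iteratedFDeriv_le_sum_abs_iterPD {d m : ℕ} {g : (Fin d → ℝ) → ℝ}
    (hg : ContDiff ℝ m g) (x : Fin d → ℝ) :
    ‖iteratedFDeriv ℝ m g x‖ ≤ ∑ ls : Fin m → Fin d, |iterPD d (List.ofFn ls) g x| := by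
  simpa only [iterPD_ofFn_eq_iteratedFDeriv hg] using
    (iteratedFDeriv ℝ m g x).norm_le_sum_abs_apply_single

theorem norm_iteratedFDeriv_le_of_sum_abs_iterPD_le {d m : ℕ} [NeZero d]
    {f : (Fin d → ℝ) → (Fin d → ℝ)} (hf : ContDiff ℝ m f) {c : ℝ}
    (hc : ∀ (i : Fin d) (x : Fin d → ℝ),
      ∑ ls : Fin m → Fin d, |iterPD d (List.ofFn ls) (fun y => f y i) x| ≤ c)
    (x : Fin d → ℝ) : ‖iteratedFDeriv ℝ m f x‖ ≤ c := by
  have hc0 : 0 ≤ c := (Finset.sum_nonneg fun _ _ => abs_nonneg _).trans (hc 0 x)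
  refine ContinuousMultilinearMap.opNorm_le_bound hc0 fun u =>
    (pi_norm_le_iff_of_nonneg (by positivity)).2 fun i => ?_
  have hcomp : iteratedFDeriv ℝ m f x u i = iteratedFDeriv ℝ m (fun y => f y i) x u :=
    congrArg (· u) ((ContinuousLinearMap.proj i).iteratedFDeriv_comp_left hf.contDiffAt le_rfl).symm
  rw [hcomp]
  exact ContinuousMultilinearMap.le_of_opNorm_le
    ((norm_iteratedFDeriv_le_sum_abs_iterPD ((ContinuousLinearMap.proj i).contDiff.comp hf) x).trans
      (hc i x)) u

theorem norm_sub_sum_iteratedFDeriv_le {E F : Type*} [NormedAddCommGroup E] [NormedSpace ℝ E]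
    [NormedAddCommGroup F] [NormedSpace ℝ F] [CompleteSpace F] {m : ℕ} {f : E → F}
    (hf : ContDiff ℝ (m + 1) f) {c : ℝ} (hc : ∀ x, ‖iteratedFDeriv ℝ (m + 1) f x‖ ≤ c)
    (a x : E) :
    ‖f x - ∑ j ∈ Finset.range (m + 1), (j.factorial : ℝ)⁻¹ •
        iteratedFDeriv ℝ j f a (fun _ => x - a)‖ ≤ c * ‖x - a‖ ^ (m + 1) := by
  have hc0 : 0 ≤ c := (norm_nonneg _).trans (hc a)
  have htaylor := map_add_eq_sum_add_integral_iteratedFDeriv (x := a) (y := x - a)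
    fun t _ => hf.contDiffAt
  rw [add_sub_cancel] at htaylor
  rw [htaylor, add_sub_cancel_left, norm_smul]
  have hintegrand : ∀ t ∈ Set.uIoc (0 : ℝ) 1, ‖(1 - t) ^ m •
      iteratedFDeriv ℝ (m + 1) f (a + t • (x - a)) (fun _ => x - a)‖ ≤ c * ‖x - a‖ ^ (m + 1) := by
    intro t ht
    rw [Set.uIoc_of_le zero_le_one] at ht
    obtain ⟨ht0, ht1⟩ := ht
    rw [norm_smul, norm_pow, Real.norm_of_nonneg (by linarith)]
    calc (1 - t) ^ m * ‖iteratedFDeriv ℝ (m + 1) f (a + t • (x - a)) (fun _ => x - a)‖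
        ≤ 1 * (c * ‖x - a‖ ^ (m + 1)) := by
          gcongr
          · exact pow_le_one₀ (by linarith) (by linarith)
          · simpa using
              ContinuousMultilinearMap.le_of_opNorm_le (hc _) (fun _ : Fin (m + 1) => x - a)
      _ = c * ‖x - a‖ ^ (m + 1) := one_mul _
  calc ‖((m.factorial : ℝ))⁻¹‖ * ‖∫ t in (0 : ℝ)..1, (1 - t) ^ m •
        iteratedFDeriv ℝ (m + 1) f (a + t • (x - a)) (fun _ => x - a)‖
      ≤ 1 * (c * ‖x - a‖ ^ (m + 1) * |1 - 0|) := by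
        gcongr
        · rw [norm_inv, Real.norm_natCast]
          exact inv_le_one_of_one_le₀ (mod_cast Nat.one_le_iff_ne_zero.2 (Nat.factorial_ne_zero m))
        · exact intervalIntegral.norm_integral_le_of_norm_le_const hintegrand
    _ = c * ‖x - a‖ ^ (m + 1) := by norm_num

section EquivFDeriv

variable {E F : Type*} [NormedAddCommGroup E] [NormedSpace ℝ E] [NormedAddCommGroup F]
  [NormedSpace ℝ F] {e : E ≃ F} {x : E}

theorem Equiv.fderiv_symm_comp_fderiv (he : DifferentiableAt ℝ e x)
    (hes : DifferentiableAt ℝ e.symm (e x)) :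
    (fderiv ℝ e.symm (e x)).comp (fderiv ℝ e x) = ContinuousLinearMap.id ℝ E := by
  have hcomp := hes.hasFDerivAt.comp x he.hasFDerivAt
  rw [e.symm_comp_self] at hcomp
  exact hcomp.unique (hasFDerivAt_id x)

theorem Equiv.fderiv_comp_fderiv_symm (he : DifferentiableAt ℝ e x)
    (hes : DifferentiableAt ℝ e.symm (e x)) :
    (fderiv ℝ e x).comp (fderiv ℝ e.symm (e x)) = ContinuousLinearMap.id ℝ F := by
  have he' : HasFDerivAt e (fderiv ℝ e x) (e.symm (e x)) := by
    rw [e.symm_apply_apply]; exact he.hasFDerivAt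
  have hcomp := he'.comp (e x) hes.hasFDerivAt
  rw [e.self_comp_symm] at hcomp
  exact hcomp.unique (hasFDerivAt_id (e x))

end EquivFDeriv

noncomputable def latticeBox {d : ℕ} (y : Fin d → ℝ) (R : ℝ) : Finset (Fin d → ℤ) :=
  Fintype.piFinset fun i => Finset.Icc ⌈y i - R⌉ ⌊y i + R⌋

theorem mem_latticeBox {d : ℕ} {y : Fin d → ℝ} {R : ℝ} {k : Fin d → ℤ} :
    k ∈ latticeBox y R ↔ ∀ i, |y i - k i| ≤ R := by
  simp only [latticeBox, Fintype.mem_piFinset, Finset.mem_Icc, Int.ceil_le, Int.le_floor, abs_le]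
  refine forall_congr' fun i => ?_
  constructor <;> rintro ⟨h₁, h₂⟩ <;> constructor <;> linarith

theorem card_latticeBox_le {d : ℕ} (y : Fin d → ℝ) {R : ℝ} (hR : 0 ≤ R) :
    ((latticeBox y R).card : ℝ) ≤ (2 * R + 1) ^ d := by
  rw [latticeBox, Fintype.card_piFinset, Nat.cast_prod]
  refine (Finset.prod_le_prod (fun _ _ => Nat.cast_nonneg _) fun i _ => ?_).trans_eq
    (by rw [Finset.prod_const, Finset.card_univ, Fintype.card_fin])
  rw [Int.card_Icc, ← Int.cast_natCast, Int.toNat_eq_max, Int.cast_max, Int.cast_zero]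
  refine max_le ?_ (by linarith)
  push_cast
  linarith [Int.floor_le (y i + R), Int.le_ceil (y i - R)]

theorem mem_latticeBox_of_norm_sub_node_le {d : ℕ} {h R : ℝ} (hh : 0 < h) {z : Fin d → ℝ}
    {k : Fin d → ℤ} (hk : ‖z - node d h k‖ ≤ h * R) : k ∈ latticeBox (h⁻¹ • z) R := by
  refine mem_latticeBox.2 fun i => ?_
  have hi := (norm_le_pi_norm (z - node d h k) i).trans hk
  rw [Real.norm_eq_abs, Pi.sub_apply, node] at hi
  have hscale : (h⁻¹ • z) i - k i = h⁻¹ * (z i - h * k i) := by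
    rw [Pi.smul_apply, smul_eq_mul]; field_simp
  rw [hscale, abs_mul, abs_inv, abs_of_pos hh, inv_mul_le_iff₀ hh]
  exact hi

theorem abs_tsum_sub_tsum_le {ι : Type*} (s : Finset ι) {a b : ι → ℝ} (ha : ∀ k ∉ s, a k = 0)
    (hb : ∀ k ∉ s, b k = 0) {M : ℝ} (hM : ∀ k ∈ s, |a k - b k| ≤ M) :
    |∑' k, a k - ∑' k, b k| ≤ s.card * M := by
  rw [tsum_eq_sum ha, tsum_eq_sum hb, ← Finset.sum_sub_distrib, ← nsmul_eq_mul]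
  exact (Finset.abs_sum_le_sum_abs _ _).trans (Finset.sum_le_card_nsmul _ _ _ hM)

section Transport

variable {d : ℕ} {h ρ0 : ℝ} {φ : (Fin d → ℝ) → ℝ} {F : (Fin d → ℝ) ≃ (Fin d → ℝ)}
  {k : Fin d → ℤ}

theorem norm_sub_node_le_of_part_ne_zero (hh : 0 < h) (hφ : ∀ x, φ x ≠ 0 → ‖x‖ ≤ ρ0)
    {y : Fin d → ℝ} (hy : part d h φ k y ≠ 0) : ‖y - node d h k‖ ≤ h * ρ0 := by
  have hscale : y - node d h k = h • fun i => y i / h - k i := by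
    funext i
    simp only [Pi.sub_apply, node, Pi.smul_apply, smul_eq_mul]
    field_simp
  rw [hscale, norm_smul, Real.norm_of_nonneg hh.le]
  exact mul_le_mul_of_nonneg_left (hφ _ (right_ne_zero_of_mul hy)) hh.le

theorem abs_part_sub_part_le {Lφ : ℝ≥0} (hh : 0 < h) (hφL : LipschitzWith Lφ φ)
    (y y' : Fin d → ℝ) :
    |part d h φ k y - part d h φ k y'| ≤ Lφ * (h ^ (d + 1))⁻¹ * ‖y - y'‖ := by
  have hscale : ((fun i => y i / h - k i) - fun i => y' i / h - k i) = h⁻¹ • (y - y') := by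
    funext i
    simp only [Pi.sub_apply, Pi.smul_apply, smul_eq_mul]
    ring
  calc |part d h φ k y - part d h φ k y'|
      = (h ^ d)⁻¹ * |φ (fun i => y i / h - k i) - φ (fun i => y' i / h - k i)| := by
        rw [part, part, ← mul_sub, abs_mul, abs_of_pos (by positivity)]
    _ ≤ (h ^ d)⁻¹ * (Lφ * ‖h⁻¹ • (y - y')‖) := by
        rw [← hscale, ← dist_eq_norm, ← Real.dist_eq]
        gcongr
        exact hφL.dist_le_mul _ _
    _ = Lφ * (h ^ (d + 1))⁻¹ * ‖y - y'‖ := by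
        rw [norm_smul, Real.norm_of_nonneg (inv_nonneg.2 hh.le), pow_succ, mul_inv]
        ring

theorem F1_B1 (hF : Differentiable ℝ F) (hB : Differentiable ℝ F.symm) (x : Fin d → ℝ) :
    F1 d h F k (B1 d h F k x) = x := by
  have hid := DFunLike.congr_fun
    (Equiv.fderiv_comp_fderiv_symm (hF (node d h k)) (hB _)) (x - F (node d h k))
  rw [ContinuousLinearMap.comp_apply, ContinuousLinearMap.id_apply] at hid
  rw [F1, B1, add_sub_cancel_left, hid, add_sub_cancel]

theorem B1_F1 (hF : Differentiable ℝ F) (hB : Differentiable ℝ F.symm) (y : Fin d → ℝ) :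
    B1 d h F k (F1 d h F k y) = y := by
  have hid := DFunLike.congr_fun
    (Equiv.fderiv_symm_comp_fderiv (hF (node d h k)) (hB _)) (y - node d h k)
  rw [ContinuousLinearMap.comp_apply, ContinuousLinearMap.id_apply] at hid
  rw [F1, B1, add_sub_cancel_left, hid, add_sub_cancel]

theorem norm_B1_sub_symm_le {cB2 : ℝ}
    (hB2 : ∀ a x, ‖F.symm x - F.symm a - fderiv ℝ F.symm a (x - a)‖ ≤ cB2 * ‖x - a‖ ^ 2)
    (x : Fin d → ℝ) :
    ‖B1 d h F k x - F.symm x‖ ≤ cB2 * ‖x - F (node d h k)‖ ^ 2 := by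
  have hlin : B1 d h F k x - F.symm x = -(F.symm x - F.symm (F (node d h k)) -
      fderiv ℝ F.symm (F (node d h k)) (x - F (node d h k))) := by
    rw [F.symm_apply_apply, B1]
    abel
  rw [hlin, norm_neg]
  exact hB2 _ x

variable {x : Fin d → ℝ} {cF1 cB2 : ℝ}

theorem mem_St_iff (hF : Differentiable ℝ F) (hB : Differentiable ℝ F.symm) :
    x ∈ St d h ρ0 φ F k ↔ ‖B1 d h F k x - node d h k‖ ≤ h * ρt d h ρ0 φ F k := by
  constructor
  · rintro ⟨y, hy, rfl⟩
    rw [B1_F1 hF hB]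
    exact mem_closedBall_iff_norm.1 hy
  · exact fun hx => ⟨_, mem_closedBall_iff_norm.2 hx, F1_B1 hF hB x⟩

theorem norm_B1_sub_symm_le_of_mem_image_support (hh : 0 < h)
    (hφ : ∀ x, φ x ≠ 0 → ‖x‖ ≤ ρ0) (hcF1 : 0 ≤ cF1)
    (hFlip : ∀ x y, ‖F y - F x‖ ≤ cF1 * ‖y - x‖) (hcB2 : 0 ≤ cB2)
    (hB2 : ∀ a x, ‖F.symm x - F.symm a - fderiv ℝ F.symm a (x - a)‖ ≤ cB2 * ‖x - a‖ ^ 2)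
    (hx : x ∈ F '' Function.support (part d h φ k)) :
    ‖B1 d h F k x - F.symm x‖ ≤ cB2 * (cF1 * (h * ρ0)) ^ 2 := by
  obtain ⟨y, hy, rfl⟩ := hx
  refine (norm_B1_sub_symm_le hB2 _).trans ?_
  gcongr
  exact (hFlip _ _).trans
    (mul_le_mul_of_nonneg_left (norm_sub_node_le_of_part_ne_zero hh hφ hy) hcF1)

theorem ρt_le (hh : 0 < h) (hφ : ∀ x, φ x ≠ 0 → ‖x‖ ≤ ρ0) (hcF1 : 0 ≤ cF1)
    (hFlip : ∀ x y, ‖F y - F x‖ ≤ cF1 * ‖y - x‖) (hcB2 : 0 ≤ cB2)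
    (hB2 : ∀ a x, ‖F.symm x - F.symm a - fderiv ℝ F.symm a (x - a)‖ ≤ cB2 * ‖x - a‖ ^ 2) :
    ρt d h ρ0 φ F k ≤ ρ0 + h * cB2 * (cF1 * ρ0) ^ 2 := by
  have hsup := Real.iSup_le (fun u : F '' Function.support (part d h φ k) =>
    norm_B1_sub_symm_le_of_mem_image_support hh hφ hcF1 hFlip hcB2 hB2 u.2) (by positivity)
  calc ρt d h ρ0 φ F k ≤ ρ0 + h⁻¹ * (cB2 * (cF1 * (h * ρ0)) ^ 2) := by
        rw [ρt]; gcongr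
    _ = ρ0 + h * cB2 * (cF1 * ρ0) ^ 2 := by field_simp

theorem mem_St_of_part_symm_ne_zero (hh : 0 < h) (hφ : ∀ x, φ x ≠ 0 → ‖x‖ ≤ ρ0)
    (hcF1 : 0 ≤ cF1) (hFlip : ∀ x y, ‖F y - F x‖ ≤ cF1 * ‖y - x‖) (hcB2 : 0 ≤ cB2)
    (hB2 : ∀ a x, ‖F.symm x - F.symm a - fderiv ℝ F.symm a (x - a)‖ ≤ cB2 * ‖x - a‖ ^ 2)
    (hF : Differentiable ℝ F) (hB : Differentiable ℝ F.symm)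
    (hx : part d h φ k (F.symm x) ≠ 0) : x ∈ St d h ρ0 φ F k := by
  have hbdd : BddAbove (Set.range fun u : F '' Function.support (part d h φ k) =>
      ‖B1 d h F k u.1 - F.symm u.1‖) :=
    ⟨_, Set.forall_mem_range.2 fun u =>
      norm_B1_sub_symm_le_of_mem_image_support hh hφ hcF1 hFlip hcB2 hB2 u.2⟩
  rw [mem_St_iff hF hB]
  calc ‖B1 d h F k x - node d h k‖
      ≤ ‖B1 d h F k x - F.symm x‖ + ‖F.symm x - node d h k‖ := norm_sub_le_norm_sub_add_norm_sub ..
    _ ≤ (⨆ u : F '' Function.support (part d h φ k), ‖B1 d h F k u.1 - F.symm u.1‖) + h * ρ0 :=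
        add_le_add (le_ciSup hbdd ⟨x, F.symm x, hx, F.apply_symm_apply x⟩)
          (norm_sub_node_le_of_part_ne_zero hh hφ hx)
    _ = h * ρt d h ρ0 φ F k := by
        rw [ρt, mul_add, ← mul_assoc, mul_inv_cancel₀ hh.ne', one_mul, add_comm]

theorem norm_sub_F_node_le_of_mem_St (hDF : ∀ y, ‖fderiv ℝ F y‖ ≤ cF1)
    (hx : x ∈ St d h ρ0 φ F k) : ‖x - F (node d h k)‖ ≤ cF1 * (h * ρt d h ρ0 φ F k) := by
  obtain ⟨y, hy, rfl⟩ := hx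
  rw [F1, add_sub_cancel_left]
  exact ((fderiv ℝ F _).le_of_opNorm_le (hDF _) _).trans <|
    mul_le_mul_of_nonneg_left (mem_closedBall_iff_norm.1 hy) ((norm_nonneg _).trans (hDF 0))

theorem norm_symm_sub_node_le_of_mem_St (hF : Differentiable ℝ F) (hB : Differentiable ℝ F.symm)
    (hB2 : ∀ a x, ‖F.symm x - F.symm a - fderiv ℝ F.symm a (x - a)‖ ≤ cB2 * ‖x - a‖ ^ 2)
    (hx : x ∈ St d h ρ0 φ F k) :
    ‖F.symm x - node d h k‖ ≤ cB2 * ‖x - F (node d h k)‖ ^ 2 + h * ρt d h ρ0 φ F k :=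
  (norm_sub_le_norm_sub_add_norm_sub _ (B1 d h F k x) _).trans <|
    add_le_add (norm_sub_rev (F.symm x) _ ▸ norm_B1_sub_symm_le hB2 x) ((mem_St_iff hF hB).1 hx)

/-- The `r`-th order transported particle `T̄_{h,(r)} φ⁰_{h,k}`. -/
noncomputable def transportPart (d r : ℕ) (h ρ0 : ℝ) (φ : (Fin d → ℝ) → ℝ)
    (F : (Fin d → ℝ) ≃ (Fin d → ℝ)) (k : Fin d → ℤ) : (Fin d → ℝ) → ℝ :=
  (St d h ρ0 φ F k).indicator fun y => part d h φ k (taylorP d r F.symm (F (node d h k)) y)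

theorem abs_transportPart_sub_part_le {r : ℕ} {Lφ : ℝ≥0} {cBr : ℝ} (hh : 0 < h)
    (hφL : LipschitzWith Lφ φ)
    (hBr : ∀ a x, ‖F.symm x - taylorP d r F.symm a x‖ ≤ cBr * ‖x - a‖ ^ (r + 1))
    (hx : x ∈ St d h ρ0 φ F k) :
    |transportPart d r h ρ0 φ F k x - part d h φ k (F.symm x)|
      ≤ Lφ * (h ^ (d + 1))⁻¹ * (cBr * ‖x - F (node d h k)‖ ^ (r + 1)) := by
  rw [transportPart, Set.indicator_of_mem hx]
  refine (abs_part_sub_part_le hh hφL _ _).trans ?_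
  rw [norm_sub_rev]
  gcongr
  exact hBr _ _

theorem abs_transport_error_le {r : ℕ} {Lφ : ℝ≥0} {cBr W R : ℝ}
    {w : (Fin d → ℤ) → ℝ} (hh : 0 < h) (hφL : LipschitzWith Lφ φ)
    (hφ : ∀ x, φ x ≠ 0 → ‖x‖ ≤ ρ0) (hw : ∀ k, |w k| ≤ W)
    (hF : Differentiable ℝ F) (hB : Differentiable ℝ F.symm) (hDF : ∀ y, ‖fderiv ℝ F y‖ ≤ cF1)
    (hcB2 : 0 ≤ cB2)
    (hB2 : ∀ a x, ‖F.symm x - F.symm a - fderiv ℝ F.symm a (x - a)‖ ≤ cB2 * ‖x - a‖ ^ 2)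
    (hcBr : 0 ≤ cBr)
    (hBr : ∀ a x, ‖F.symm x - taylorP d r F.symm a x‖ ≤ cBr * ‖x - a‖ ^ (r + 1))
    (hR0 : 0 ≤ R) (hR : ρ0 + h * cB2 * (cF1 * ρ0) ^ 2 ≤ R) :
    |∑' k, w k * transportPart d r h ρ0 φ F k x - ∑' k, w k * part d h φ k (F.symm x)|
      ≤ (2 * (R + h * cB2 * (cF1 * R) ^ 2) + 1) ^ d *
        (W * (Lφ * (h ^ (d + 1))⁻¹ * (cBr * (cF1 * (h * R)) ^ (r + 1)))) := by
  have hcF1 : 0 ≤ cF1 := (norm_nonneg _).trans (hDF 0)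
  have hW : 0 ≤ W := (abs_nonneg _).trans (hw 0)
  have hFlip : ∀ x y, ‖F y - F x‖ ≤ cF1 * ‖y - x‖ := fun _ _ =>
    convex_univ.norm_image_sub_le_of_norm_fderiv_le (fun z _ => hF z) (fun z _ => hDF z)
      trivial trivial
  have hρt : ∀ k, ρt d h ρ0 φ F k ≤ R := fun _ =>
    (ρt_le hh hφ hcF1 hFlip hcB2 hB2).trans hR
  have hSt : ∀ k, x ∈ St d h ρ0 φ F k → ‖x - F (node d h k)‖ ≤ cF1 * (h * R) := fun k hx =>
    (norm_sub_F_node_le_of_mem_St hDF hx).trans (by gcongr; exact hρt k)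
  have hbox : ∀ k, x ∈ St d h ρ0 φ F k →
      k ∈ latticeBox (h⁻¹ • F.symm x) (R + h * cB2 * (cF1 * R) ^ 2) := fun k hx =>
    mem_latticeBox_of_norm_sub_node_le hh <| (norm_symm_sub_node_le_of_mem_St hF hB hB2 hx).trans <|
      calc cB2 * ‖x - F (node d h k)‖ ^ 2 + h * ρt d h ρ0 φ F k
          ≤ cB2 * (cF1 * (h * R)) ^ 2 + h * R := by gcongr; exacts [hSt k hx, hρt k]
        _ = h * (R + h * cB2 * (cF1 * R) ^ 2) := by ring
  have hpart : ∀ k, x ∉ St d h ρ0 φ F k → part d h φ k (F.symm x) = 0 := fun k hx =>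
    not_not.1 (mt (mem_St_of_part_symm_ne_zero hh hφ hcF1 hFlip hcB2 hB2 hF hB) hx)
  refine (abs_tsum_sub_tsum_le (latticeBox (h⁻¹ • F.symm x) (R + h * cB2 * (cF1 * R) ^ 2))
    (M := W * (Lφ * (h ^ (d + 1))⁻¹ * (cBr * (cF1 * (h * R)) ^ (r + 1))))
    (fun k hk => ?_) (fun k hk => ?_) (fun k _ => ?_)).trans ?_
  · rw [transportPart, Set.indicator_of_notMem (mt (hbox k) hk), mul_zero]
  · rw [hpart k (mt (hbox k) hk), mul_zero]
  · by_cases hx : x ∈ St d h ρ0 φ F k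
    · rw [← mul_sub, abs_mul]
      refine mul_le_mul (hw k) ((abs_transportPart_sub_part_le hh hφL hBr hx).trans ?_)
        (abs_nonneg _) hW
      gcongr
      exact hSt k hx
    · rw [transportPart, Set.indicator_of_notMem hx, hpart k hx, sub_self, abs_zero]
      positivity
  · gcongr
    exact card_latticeBox_le _ (by positivity)

end Transport

theorem transport_bound_le {d r : ℕ} {Lφ : ℝ≥0} {h ρ0 ρe cF1 cB2 cBr cw S : ℝ} (hh : 0 < h)
    (hρ0 : 0 ≤ ρ0) (hcF1 : 0 ≤ cF1) (hcB2 : 0 ≤ cB2) (hcBr : 0 ≤ cBr) (hcw : 0 ≤ cw)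
    (hS : 0 ≤ S) (hρe : ρe = ρ0 * (1 + h * ρ0 / 2 * cF1 ^ 2 * cB2)) :
    (2 * (2 * ρe + h * cB2 * (cF1 * (2 * ρe)) ^ 2) + 1) ^ d *
        (cw * h ^ d * S * (Lφ * (h ^ (d + 1))⁻¹ * (cBr * (cF1 * (h * (2 * ρe))) ^ (r + 1))))
      ≤ (4 * ρ0 + 10) ^ d * cw * (Lφ + 1) * 2 ^ (r + 1) * h ^ r *
          ((ρe * cF1) ^ (r + 1) * cBr) * (1 + h * ((ρe * cF1) ^ 2 * cB2)) ^ d * S := by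
  have hρ0e : ρ0 ≤ ρe := by
    rw [hρe]
    nlinarith [mul_nonneg hρ0 (by positivity : 0 ≤ h * ρ0 / 2 * cF1 ^ 2 * cB2)]
  have hρe0 : 0 ≤ ρe := hρ0.trans hρ0e
  have hρe_le : ρe ≤ ρ0 + h * ((ρe * cF1) ^ 2 * cB2) / 2 := by
    have : ρ0 ^ 2 ≤ ρe ^ 2 := pow_le_pow_left₀ hρ0 hρ0e 2
    rw [hρe] at this ⊢
    nlinarith [mul_nonneg (mul_nonneg hh.le (sq_nonneg cF1)) hcB2]
  have hc1 : 0 ≤ h * ((ρe * cF1) ^ 2 * cB2) := by positivity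
  have hbase : 2 * (2 * ρe + h * cB2 * (cF1 * (2 * ρe)) ^ 2) + 1
      ≤ (4 * ρ0 + 10) * (1 + h * ((ρe * cF1) ^ 2 * cB2)) := by
    nlinarith [mul_nonneg hρ0 hc1]
  have hfactor : cw * h ^ d * S * (Lφ * (h ^ (d + 1))⁻¹ * (cBr * (cF1 * (h * (2 * ρe))) ^ (r + 1)))
      = Lφ * (cw * 2 ^ (r + 1) * h ^ r * ((ρe * cF1) ^ (r + 1) * cBr) * S) := by
    field_simp
    ring
  rw [hfactor]
  calc _ ≤ ((4 * ρ0 + 10) * (1 + h * ((ρe * cF1) ^ 2 * cB2))) ^ d *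
        ((Lφ + 1) * (cw * 2 ^ (r + 1) * h ^ r * ((ρe * cF1) ^ (r + 1) * cBr) * S)) := by
        refine mul_le_mul (pow_le_pow_left₀ (by positivity) hbase d)
          (mul_le_mul_of_nonneg_right (by linarith) (by positivity)) (by positivity) (by positivity)
    _ = _ := by rw [mul_pow]; ring

/-- the `r`-th order transport operator
`T̄_{h,(r)} φ⁰_{h,k}(x) := χ_{Σ̃_{h,k}}(x) φ⁰_{h,k}(B̄_{(r),k}(x))` satisfies
`‖(T̄_{h,(r)} − T̄_ex) f⁰_h‖_∞ ≤ C h^r c̃_{F,(r)} (1 + h c̃_{F,(1)})^d ‖f⁰‖_∞`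
with `c̃_{F,(m)} := (ρ̃ |F̄|₁)^{m+1} |B̄|_{m+1}`, `ρ̃ := ρ⁰(1 + (hρ⁰/2)|F̄|₁²|B̄|₂)`,
and `C = C(c_w, L_φ, ρ⁰, d, r)`. -/
theorem r_th_order_transport_error
    (d r : ℕ) (hd : 1 ≤ d) (hr : 1 ≤ r)
    (cw : ℝ) (hcw : 0 < cw) (Lφ : ℝ≥0) (ρ0 : ℝ) (hρ0 : 0 < ρ0) :
    ∃ C : ℝ, 0 < C ∧
      ∀ (h : ℝ), 0 < h →
      ∀ (φ : (Fin d → ℝ) → ℝ), LipschitzWith Lφ φ → (∀ x, φ x ≠ 0 → ‖x‖ ≤ ρ0) →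
      ∀ (f0 : (Fin d → ℝ) → ℝ), BddAbove (Set.range fun x => |f0 x|) →
      ∀ (w : (Fin d → ℤ) → ℝ), (∀ k, |w k| ≤ cw * h ^ d * ⨆ y, |f0 y|) →
      ∀ (F : (Fin d → ℝ) ≃ (Fin d → ℝ)),
        ContDiff ℝ 1 (F : (Fin d → ℝ) → (Fin d → ℝ)) →
        ContDiff ℝ (r + 1 : ℕ) (F.symm : (Fin d → ℝ) → (Fin d → ℝ)) →
      -- `cF1` bounds `|F̄|₁`
      ∀ (cF1 : ℝ), (∀ (i : Fin d) (x : Fin d → ℝ),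
          ∑ l : Fin d, |pd d l (fun y => F y i) x| ≤ cF1) →
      -- `cB2` bounds `|B̄|₂`
      ∀ (cB2 : ℝ), (∀ (i : Fin d) (x : Fin d → ℝ),
          ∑ l1 : Fin d, ∑ l2 : Fin d,
            |pd d l1 (pd d l2 (fun y => F.symm y i)) x| ≤ cB2) →
      -- `cBr` bounds `|B̄|_{r+1}`
      ∀ (cBr : ℝ), (∀ (i : Fin d) (x : Fin d → ℝ),
          ∑ ls : Fin (r + 1) → Fin d,
            |iterPD d (List.ofFn ls) (fun y => F.symm y i) x| ≤ cBr) →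
      ∀ x : Fin d → ℝ,
        |(∑' k : Fin d → ℤ, w k *
              (St d h ρ0 φ F k).indicator
                (fun y => part d h φ k (taylorP d r (F.symm) (F (node d h k)) y)) x)
            - ∑' k : Fin d → ℤ, w k * part d h φ k (F.symm x)|
          ≤ C * h ^ r
              * ((ρ0 * (1 + h * ρ0 / 2 * cF1 ^ 2 * cB2) * cF1) ^ (r + 1) * cBr)
              * (1 + h * ((ρ0 * (1 + h * ρ0 / 2 * cF1 ^ 2 * cB2) * cF1) ^ 2 * cB2)) ^ d
              * ⨆ y, |f0 y| := by
  refine ⟨(4 * ρ0 + 10) ^ d * cw * ((Lφ : ℝ) + 1) * 2 ^ (r + 1), by positivity, ?_⟩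
  intro h hh φ hφL hφ f0 hf0 w hw F hF hB cF1 hcF1 cB2 hcB2 cBr hcBr x
  have : NeZero d := ⟨by omega⟩
  have hB₂ : ContDiff ℝ (2 : ℕ) F.symm := hB.of_le (mod_cast Nat.add_le_add_right hr 1)
  have hDF : ∀ y, ‖fderiv ℝ F y‖ ≤ cF1 := fun y => by
    simpa using norm_iteratedFDeriv_le_of_sum_abs_iterPD_le (m := 1) (mod_cast hF)
      (by simpa only [sum_abs_iterPD_fin_one] using hcF1) y
  have hD2B : ∀ y, ‖iteratedFDeriv ℝ 2 F.symm y‖ ≤ cB2 :=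
    norm_iteratedFDeriv_le_of_sum_abs_iterPD_le hB₂
      (by simpa only [sum_abs_iterPD_fin_two] using hcB2)
  have hDrB : ∀ y, ‖iteratedFDeriv ℝ (r + 1) F.symm y‖ ≤ cBr :=
    norm_iteratedFDeriv_le_of_sum_abs_iterPD_le hB hcBr
  have hB2 : ∀ a y, ‖F.symm y - F.symm a - fderiv ℝ F.symm a (y - a)‖ ≤ cB2 * ‖y - a‖ ^ 2 := by
    intro a y
    simpa [Finset.sum_range_succ, sub_sub] using
      norm_sub_sum_iteratedFDeriv_le (m := 1) (mod_cast hB₂) hD2B a y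
  have hBr : ∀ a y, ‖F.symm y - taylorP d r F.symm a y‖ ≤ cBr * ‖y - a‖ ^ (r + 1) :=
    norm_sub_sum_iteratedFDeriv_le (mod_cast hB) hDrB
  have hcF1' : 0 ≤ cF1 := (norm_nonneg _).trans (hDF 0)
  have hcB2' : 0 ≤ cB2 := (norm_nonneg _).trans (hD2B 0)
  have hcBr' : 0 ≤ cBr := (norm_nonneg _).trans (hDrB 0)
  have hS : 0 ≤ ⨆ y, |f0 y| := (abs_nonneg _).trans (le_ciSup hf0 0)
  have hR : ρ0 + h * cB2 * (cF1 * ρ0) ^ 2 ≤ 2 * (ρ0 * (1 + h * ρ0 / 2 * cF1 ^ 2 * cB2)) := by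
    ring_nf; linarith
  exact (abs_transport_error_le hh hφL hφ hw (hF.differentiable one_ne_zero)
    (hB.differentiable (by simp)) hDF hcB2' hB2 hcBr' hBr (by positivity) hR).trans
    (transport_bound_le hh hρ0.le hcF1' hcB2' hcBr' hcw.le hS rfl)
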